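/- arXiv:1709.09107 — 5 statements merged into one kernel-verified Lean document; each statement's English description precedes it below -/
import Mathlib

section
/- For every complex number s with Re(s) > 0, one has Gammaℝ(s+1) · ∫_ℝ (1 + x^2)^(-(s+1)/2) dx = Gammaℝ(s). (This expresses the paper's claim that the Langlands–Shahidi normalized intertwining operator of SL₂(ℝ) acts on the spherical vector by a quantity independent of s: the normalizing factor Gammaℝ(s)/Gammaℝ(s+1) exactly matches the Gindikin–Karpelevich integral.) -/
/-!
The substitution `t = x² / (1 + x²)` maps `(0, ∞)` bijectively onto `(0, 1)`, with
`dt = 2x / (1 + x²)² dx`, and turns the Beta integrand `t^(-1/2) (1 - t)^(v - 1)` into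
`2 (1 + x²)^(-(v + 1/2))`. As the integrand is even, `∫_ℝ (1 + x²)^(-(s+1)/2) dx = B(1/2, s/2)
= Γ(1/2) Γ(s/2) / Γ((s+1)/2)`, and `Γ(1/2) = π^(1/2)` converts this into `Gammaℝ s / Gammaℝ (s+1)`.
-/

open Complex MeasureTheory Real Set

theorem integral_eq_two_smul_integral_Ioi_of_even {E : Type*} [NormedAddCommGroup E]
    [NormedSpace ℝ E] {f : ℝ → E} (hf : Integrable f) (heven : ∀ x, f (-x) = f x) :
    ∫ x, f x = (2 : ℝ) • ∫ x in Ioi 0, f x := by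
  rw [← intervalIntegral.integral_Iic_add_Ioi hf.integrableOn hf.integrableOn, ← neg_zero,
    ← integral_comp_neg_Ioi, neg_zero, two_smul]
  simp only [heven]

theorem integrable_ofReal_one_add_sq_cpow {w : ℂ} (hw : w.re < -1 / 2) :
    Integrable fun x : ℝ ↦ ((1 + x ^ 2 : ℝ) : ℂ) ^ w := by
  have hmeas : AEStronglyMeasurable (fun x : ℝ ↦ ((1 + x ^ 2 : ℝ) : ℂ) ^ w) :=
    (Continuous.cpow (by fun_prop) continuous_const fun x ↦
      ofReal_mem_slitPlane.2 (by positivity)).aestronglyMeasurable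
  refine (integrable_norm_iff hmeas).1 ?_
  have hmaj := integrable_rpow_neg_one_add_norm_sq (E := ℝ) (μ := volume) (r := -2 * w.re)
    (by rw [Module.finrank_self, Nat.cast_one]; linarith)
  refine hmaj.congr (Filter.Eventually.of_forall fun x ↦ ?_)
  simp only [norm_cpow_eq_rpow_re_of_pos (by positivity : (0 : ℝ) < 1 + x ^ 2), Real.norm_eq_abs,
    sq_abs]
  ring_nf

theorem strictMonoOn_sq_div_one_add_sq :
    StrictMonoOn (fun x : ℝ ↦ x ^ 2 / (1 + x ^ 2)) (Ici 0) := by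
  intro x hx y hy hxy
  simp only [mem_Ici] at hx hy
  rw [div_lt_div_iff₀ (by positivity) (by positivity)]
  nlinarith

theorem image_sq_div_one_add_sq_Ioi : (fun x : ℝ ↦ x ^ 2 / (1 + x ^ 2)) '' Ioi 0 = Ioo 0 1 := by
  ext t
  constructor
  · rintro ⟨x, hx, rfl⟩
    have hx : 0 < x := hx
    exact ⟨by positivity, (div_lt_one (by positivity)).2 (by linarith)⟩
  · rintro ⟨ht0, ht1⟩
    have hpos : 0 < t / (1 - t) := div_pos ht0 (by linarith)
    refine ⟨√(t / (1 - t)), Real.sqrt_pos.2 hpos, ?_⟩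
    simp only [Real.sq_sqrt hpos.le]
    field_simp
    ring

theorem hasDerivAt_sq_div_one_add_sq (x : ℝ) :
    HasDerivAt (fun x : ℝ ↦ x ^ 2 / (1 + x ^ 2)) (2 * x / (1 + x ^ 2) ^ 2) x := by
  have hsq : HasDerivAt (fun y : ℝ ↦ y ^ 2) (2 * x) x := by simpa using hasDerivAt_pow 2 x
  exact (hsq.div (hsq.const_add 1) (by positivity)).congr_deriv (by ring)

theorem integral_Ioo_zero_one_eq_integral_Ioi_sq_div_one_add_sq {E : Type*}
    [NormedAddCommGroup E] [NormedSpace ℝ E] (g : ℝ → E) :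
    ∫ t in Ioo 0 1, g t = ∫ x in Ioi 0, (2 * x / (1 + x ^ 2) ^ 2) • g (x ^ 2 / (1 + x ^ 2)) := by
  rw [← image_sq_div_one_add_sq_Ioi, integral_image_eq_integral_abs_deriv_smul measurableSet_Ioi
    (fun x _ ↦ (hasDerivAt_sq_div_one_add_sq x).hasDerivWithinAt)
    (strictMonoOn_sq_div_one_add_sq.injOn.mono Ioi_subset_Ici_self)]
  refine setIntegral_congr_fun measurableSet_Ioi fun x (hx : 0 < x) ↦ ?_
  rw [abs_of_pos (by positivity)]

theorem ofReal_sq_cpow_neg_one_half {x : ℝ} (hx : 0 < x) :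
    ((x ^ 2 : ℝ) : ℂ) ^ ((1 : ℂ) / 2 - 1) = (x : ℂ)⁻¹ := by
  rw [show (1 : ℂ) / 2 - 1 = ((-(1 / 2) : ℝ) : ℂ) by push_cast; ring,
    ← ofReal_cpow (by positivity), ← Real.rpow_natCast, ← Real.rpow_mul hx.le]
  norm_num [Real.rpow_neg_one]

theorem smul_betaIntegrand_sq_div_one_add_sq {x : ℝ} (hx : 0 < x) (v : ℂ) :
    (2 * x / (1 + x ^ 2) ^ 2) • (((x ^ 2 / (1 + x ^ 2) : ℝ) : ℂ) ^ ((1 : ℂ) / 2 - 1) *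
      (1 - ((x ^ 2 / (1 + x ^ 2) : ℝ) : ℂ)) ^ (v - 1)) =
      2 * ((1 + x ^ 2 : ℝ) : ℂ) ^ (-(v + 1 / 2)) := by
  set A : ℝ := 1 + x ^ 2
  have hA : 0 < A := by positivity
  have hA0 : (A : ℂ) ≠ 0 := ofReal_ne_zero.2 hA.ne'
  have hx0 : (x : ℂ) ≠ 0 := ofReal_ne_zero.2 hx.ne'
  have hsub : (1 : ℂ) - ((x ^ 2 / A : ℝ) : ℂ) = (A : ℂ)⁻¹ := by
    rw [← ofReal_one, ← ofReal_sub, ← ofReal_inv]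
    congr 1
    field_simp
    ring
  rw [hsub, inv_cpow_ofReal_nonneg hA.le, ofReal_div,
    div_cpow_ofReal_nonneg (by positivity) hA.le, ofReal_sq_cpow_neg_one_half hx, real_smul,
    show -(v + 1 / 2) = -((2 : ℕ) + ((1 : ℂ) / 2 - 1) + (v - 1)) by push_cast; ring,
    cpow_neg, cpow_add _ _ hA0, cpow_add _ _ hA0, cpow_natCast]
  push_cast
  field_simp

theorem integral_ofReal_one_add_sq_cpow_neg {w : ℂ} (hw : 1 / 2 < w.re) :
    ∫ x : ℝ, ((1 + x ^ 2 : ℝ) : ℂ) ^ (-w) = betaIntegral (1 / 2) (w - 1 / 2) := by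
  have hint := integrable_ofReal_one_add_sq_cpow (w := -w) (by rw [neg_re]; linarith)
  calc ∫ x : ℝ, ((1 + x ^ 2 : ℝ) : ℂ) ^ (-w)
      = (2 : ℝ) • ∫ x in Ioi 0, ((1 + x ^ 2 : ℝ) : ℂ) ^ (-w) :=
        integral_eq_two_smul_integral_Ioi_of_even hint fun x ↦ by rw [neg_sq]
    _ = ∫ x in Ioi 0, (2 * x / (1 + x ^ 2) ^ 2) •
          (((x ^ 2 / (1 + x ^ 2) : ℝ) : ℂ) ^ ((1 : ℂ) / 2 - 1) *
            (1 - ((x ^ 2 / (1 + x ^ 2) : ℝ) : ℂ)) ^ (w - 1 / 2 - 1)) := by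
        rw [← integral_smul]
        refine setIntegral_congr_fun measurableSet_Ioi fun x (hx : 0 < x) ↦ ?_
        rw [smul_betaIntegrand_sq_div_one_add_sq hx, sub_add_cancel, real_smul, ofReal_ofNat]
    _ = betaIntegral (1 / 2) (w - 1 / 2) := by
        rw [← integral_Ioo_zero_one_eq_integral_Ioi_sq_div_one_add_sq
          fun t : ℝ ↦ (t : ℂ) ^ ((1 : ℂ) / 2 - 1) * (1 - (t : ℂ)) ^ (w - 1 / 2 - 1), betaIntegral,
          intervalIntegral.integral_of_le zero_le_one, integral_Ioc_eq_integral_Ioo]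

theorem Gammaℝ_add_one_mul_betaIntegral_one_half {s : ℂ} (hs : 0 < s.re) :
    Gammaℝ (s + 1) * betaIntegral (1 / 2) (s / 2) = Gammaℝ s := by
  have hs2 : 0 < (s / 2).re := by simpa using hs
  have hpi : (π : ℂ) ^ (-(s + 1) / 2) * π ^ (1 / 2 : ℂ) = π ^ (-s / 2) := by
    rw [← cpow_add _ _ (ofReal_ne_zero.2 pi_ne_zero)]
    ring_nf
  have hΓ : Complex.Gamma ((s + 1) / 2) ≠ 0 :=
    Gamma_ne_zero_of_re_pos (by rw [div_ofNat_re, add_re, one_re]; positivity)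
  rw [betaIntegral_eq_Gamma_mul_div _ _ (by norm_num) hs2, Complex.Gamma_one_half_eq,
    show 1 / 2 + s / 2 = (s + 1) / 2 by ring, Gammaℝ_def, Gammaℝ_def, ← hpi]
  field_simp

/-- The Langlands–Shahidi normalized intertwining operator of `SL₂(ℝ)` acts on the spherical
vector by a quantity independent of `s`:
`Gammaℝ(s+1) · ∫_ℝ (1 + x²)^(-(s+1)/2) dx = Gammaℝ(s)` for `Re s > 0`. -/
theorem sl2_real_normalized_intertwining_constant (s : ℂ) (hs : 0 < s.re) :
    Complex.Gammaℝ (s + 1) * ∫ x : ℝ, ((1 + x ^ 2 : ℝ) : ℂ) ^ (-(s + 1) / 2) =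
      Complex.Gammaℝ s := by
  rw [neg_div,
    integral_ofReal_one_add_sq_cpow_neg (by rw [div_ofNat_re, add_re, one_re]; linarith),
    show (s + 1) / 2 - 1 / 2 = s / 2 by ring]
  exact Gammaℝ_add_one_mul_betaIntegral_one_half hs
end

section
/- For every complex number s with Re(s) > 0, one has Gammaℂ(s+1) · ∫_{ℝ²} (1 + x^2 + y^2)^(-(s+1)) dx dy = (1/2) · Gammaℂ(s). (This expresses the paper's claim that the Langlands–Shahidi normalized intertwining operator of SL₂(ℂ) acts on the spherical vector by a quantity independent of s: the normalizing factor Gammaℂ(s)/Gammaℂ(s+1) matches the Gindikin–Karpelevich integral up to the constant 1/2 coming from the normalization of measures.) -/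
/-!
In polar coordinates, followed by the substitution `t = r²`, a radial integral over `ℝ²` becomes
`π ∫₀^∞ g t dt`; for `g t = (1 + t)^(-(s+1))` this gives `π / s`. The functional equation
`Gammaℂ (s + 1) = Gammaℂ s * s / (2π)` then leaves exactly the factor `1/2`.
-/

open Complex MeasureTheory Real Set

theorem integral_comp_sq_add_sq {E : Type*} [NormedAddCommGroup E] [NormedSpace ℝ E]
    (g : ℝ → E) : ∫ p : ℝ × ℝ, g (p.1 ^ 2 + p.2 ^ 2) = π • ∫ t in Ioi 0, g t := by
  have hpolar (p : ℝ × ℝ) :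
      (polarCoord.symm p).1 ^ 2 + (polarCoord.symm p).2 ^ 2 = p.1 ^ 2 := by
    simp only [polarCoord_symm_apply, mul_pow, ← mul_add, Real.cos_sq_add_sin_sq, mul_one]
  have hangle : (volume.restrict (Ioo (-π) π)).real univ = 2 * π := by
    simp [Real.volume_real_Ioo_of_le (by linarith [pi_pos] : -π ≤ π)]
    ring
  calc ∫ p : ℝ × ℝ, g (p.1 ^ 2 + p.2 ^ 2)
      = ∫ p in Ioi 0 ×ˢ Ioo (-π) π, p.1 • g (p.1 ^ 2) := by
        rw [← integral_comp_polarCoord_symm, polarCoord_target]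
        simp only [hpolar]
    _ = (2 * π) • ∫ r in Ioi 0, r • g (r ^ 2) := by
        rw [Measure.volume_eq_prod, ← Measure.prod_restrict,
          integral_fun_fst (fun r => r • g (r ^ 2)), hangle]
    _ = π • ∫ r in Ioi 0, (2 * r ^ ((2 : ℝ) - 1)) • g (r ^ (2 : ℝ)) := by
        simp only [mul_smul, ← integral_smul]
        norm_num [rpow_two, smul_comm (2 : ℝ) π]
    _ = π • ∫ t in Ioi 0, g t := by rw [integral_comp_rpow_Ioi_of_pos two_pos]

theorem integral_Ioi_add_cpow {a : ℂ} (ha : a.re < -1) {c : ℝ} (hc : 0 < c) :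
    ∫ t in Ioi (0 : ℝ), ((c + t : ℝ) : ℂ) ^ a = -(c : ℂ) ^ (a + 1) / (a + 1) := by
  have hshift := (measurePreserving_add_left volume c).setIntegral_preimage_emb
    (measurableEmbedding_addLeft c) (fun t : ℝ => (t : ℂ) ^ a) (Ioi c)
  rw [preimage_const_add_Ioi, sub_self] at hshift
  rw [hshift, integral_Ioi_cpow_of_lt ha hc]

theorem integral_one_add_sq_add_sq_cpow {s : ℂ} (hs : 0 < s.re) :
    ∫ p : ℝ × ℝ, ((1 + p.1 ^ 2 + p.2 ^ 2 : ℝ) : ℂ) ^ (-(s + 1)) = π / s := by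
  have hs0 : s ≠ 0 := fun h => by simp [h] at hs
  simp_rw [add_assoc (1 : ℝ)]
  rw [integral_comp_sq_add_sq (fun t => ((1 + t : ℝ) : ℂ) ^ (-(s + 1))),
    integral_Ioi_add_cpow (by simpa using hs) one_pos, ofReal_one, one_cpow, real_smul,
    show -(s + 1) + 1 = -s by ring]
  field_simp

/-- The Langlands–Shahidi normalized intertwining operator of `SL₂(ℂ)` acts on the spherical
vector by a quantity independent of `s`:
`Gammaℂ(s+1) · ∫_{ℝ²} (1 + x² + y²)^(-(s+1)) dx dy = (1/2) · Gammaℂ(s)` for `Re s > 0`. -/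
theorem sl2_complex_normalized_intertwining_constant (s : ℂ) (hs : 0 < s.re) :
    Complex.Gammaℂ (s + 1) * ∫ p : ℝ × ℝ, ((1 + p.1 ^ 2 + p.2 ^ 2 : ℝ) : ℂ) ^ (-(s + 1)) =
      (1 / 2 : ℂ) * Complex.Gammaℂ s := by
  have hs0 : s ≠ 0 := fun h => by simp [h] at hs
  rw [integral_one_add_sq_add_sq_cpow hs, Gammaℂ_add_one hs0]
  field_simp
end

section
/- For every complex number s with Re(s) > 0, one has Gammaℂ(s+1) · Gammaℝ(2s+2) · Γ(2s) · Γ(s + 1/2) = (1/(4·π^(3/2))) · Gammaℂ(s) · Gammaℝ(2s+1) · Γ(2s+1) · Γ(s+1). Equivalently, the Langlands–Shahidi normalizing factor [Gammaℂ(s+1)·Gammaℝ(2s+2)] / [Gammaℂ(s)·Gammaℝ(2s+1)] for the real quasi-split group SU(2,1) equals, up to the constant 1/(4·π^(3/2)), the reciprocal of the Knapp–Schiffmann c-function value Γ(2s)·Γ(s+1/2) / (Γ(2s+1)·Γ(s+1)). (This is the paper's key computation showing that the normalized intertwining operator of SU(2,1) over ℝ acts on the spherical vector by a constant independent of s.)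 -/
open Complex Real

/-!
After the functional equations `Γ(z + 1) = z Γ(z)`, `Gammaℂ(s + 1) = Gammaℂ(s) s / 2π` and
`Gammaℝ(s + 2) = Gammaℝ(s) s / 2π`, both sides become multiples of `s² Gammaℂ(s) Γ(2s)`, and what
remains is `Gammaℝ(2s) Γ(s + 1/2) = √π Gammaℝ(2s + 1) Γ(s)`: both sides equal `π^(-s) Γ(s) Γ(s + 1/2)`.
-/

theorem Complex.Gammaℝ_mul_Gamma_add_one_div_two (s : ℂ) :
    Gammaℝ s * Gamma ((s + 1) / 2) = (π : ℂ) ^ (1 / 2 : ℂ) * Gammaℝ (s + 1) * Gamma (s / 2) := by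
  have hπ : (π : ℂ) ≠ 0 := ofReal_ne_zero.2 pi_ne_zero
  have hsplit : (π : ℂ) ^ (-(s + 1) / 2) = (π : ℂ) ^ (-s / 2) / (π : ℂ) ^ (1 / 2 : ℂ) := by
    rw [← cpow_sub _ _ hπ]
    ring_nf
  rw [Gammaℝ_def, Gammaℝ_def, hsplit]
  field_simp

theorem Complex.ofReal_rpow_three_halves {x : ℝ} (hx : 0 < x) :
    ((x ^ ((3 : ℝ) / 2) : ℝ) : ℂ) = (x : ℂ) ^ 2 / (x : ℂ) ^ (1 / 2 : ℂ) := by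
  rw [ofReal_cpow hx.le, show (((3 : ℝ) / 2 : ℝ) : ℂ) = 2 - 1 / 2 by norm_num,
    cpow_sub _ _ (ofReal_ne_zero.2 hx.ne'), cpow_two]

/-- The Langlands–Shahidi normalizing factor for the real quasi-split group `SU(2,1)` matches,
up to the constant `1/(4·π^(3/2))`, the reciprocal of the Knapp–Schiffmann `c`-function value:
for `Re s > 0`,
`Gammaℂ(s+1) · Gammaℝ(2s+2) · Γ(2s) · Γ(s+1/2)
  = (1/(4·π^(3/2))) · Gammaℂ(s) · Gammaℝ(2s+1) · Γ(2s+1) · Γ(s+1)`. -/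
theorem su21_real_normalized_intertwining_constant (s : ℂ) (hs : 0 < s.re) :
    Complex.Gammaℂ (s + 1) * Complex.Gammaℝ (2 * s + 2) * Complex.Gamma (2 * s) *
        Complex.Gamma (s + 1 / 2) =
      (1 / (4 * ((π : ℝ) ^ ((3 : ℝ) / 2) : ℝ)) : ℂ) * Complex.Gammaℂ s *
        Complex.Gammaℝ (2 * s + 1) * Complex.Gamma (2 * s + 1) * Complex.Gamma (s + 1) := by
  have hs0 : s ≠ 0 := by rintro rfl; simp at hs
  have h2s : 2 * s ≠ 0 := mul_ne_zero two_ne_zero hs0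
  have key := Gammaℝ_mul_Gamma_add_one_div_two (2 * s)
  rw [show (2 * s + 1) / 2 = s + 1 / 2 by ring, mul_div_cancel_left₀ s two_ne_zero] at key
  rw [Gammaℂ_add_one hs0, Gammaℝ_add_two h2s, Gamma_add_one _ h2s, Gamma_add_one _ hs0,
    ofReal_rpow_three_halves pi_pos]
  calc _ = s ^ 2 / (2 * π ^ 2) * Gammaℂ s * Gamma (2 * s) *
        (Gammaℝ (2 * s) * Gamma (s + 1 / 2)) := by ring
    _ = _ := by
      rw [key]
      simp only [div_eq_mul_inv, mul_inv, inv_inv]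
      ring
end

section
/- Let p be a prime and let μ be the Haar measure on the additive group of the p-adic field ℚ_p, normalized so that μ(ℤ_p) = 1. For every complex number s with Re(s) > 0, the function x ↦ max(1, |x|_p)^(-(s+1)) is integrable on ℚ_p and ∫_{ℚ_p} max(1, |x|_p)^(-(s+1)) dμ(x) = (1 - p^(-(s+1))) / (1 - p^(-s)). (This is the Gindikin–Karpelevich/Casselman value of the standard intertwining operator of SL₂(ℚ_p) on the spherical vector of the unramified principal series, i.e. the ratio ζ_p(s)/ζ_p(s+1) of local zeta factors, entering the non-archimedean places of the paper's theorem.) -/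
/-!
Split `ℚ_p` into the shells `max(1, |x|_p) = p^n`, `n ≥ 0`, on which the integrand is the constant
`p^(-n(s+1))`. The closed ball of radius `p^(n+1)` is the disjoint union of `p` translates of the
ball of radius `p^n` (the residue classes mod `p`), so balls have measure `p^n`, the shell `n ≥ 1`
has measure `p^n - p^(n-1)`, and the integral is `1 + (1 - p⁻¹) ∑_{n ≥ 1} p^(-ns)`, a geometric
series that converges because `Re s > 0`.
-/

open Complex Function MeasureTheory Metric Set

section PiecewiseConstant

variable {α E ι : Type*} [MeasurableSpace α] [NormedAddCommGroup E] [NormedSpace ℝ E]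
  [CompleteSpace E] [Countable ι] {μ : Measure α} {T : ι → Set α} {f : α → E} {c : ι → E}

theorem integrable_and_hasSum_integral_of_eqOn_const (hT : ∀ i, MeasurableSet (T i))
    (hdisj : Pairwise (Disjoint on T)) (hcover : ⋃ i, T i = univ) (hfin : ∀ i, μ (T i) ≠ ⊤)
    (hf : ∀ i, EqOn f (fun _ ↦ c i) (T i)) (hsum : Summable fun i ↦ μ.real (T i) * ‖c i‖) :
    Integrable f μ ∧ HasSum (fun i ↦ μ.real (T i) • c i) (∫ x, f x ∂μ) := by
  have hintegral : ∀ i, ∫ x in T i, f x ∂μ = μ.real (T i) • c i := fun i ↦ by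
    rw [setIntegral_congr_fun (hT i) (hf i), setIntegral_const]
  have hnorm : ∀ i, ∫ x in T i, ‖f x‖ ∂μ = μ.real (T i) * ‖c i‖ := fun i ↦ by
    rw [setIntegral_congr_fun (hT i) fun x hx ↦ congrArg norm (hf i hx), setIntegral_const,
      smul_eq_mul]
  have hint : IntegrableOn f (⋃ i, T i) μ :=
    integrableOn_iUnion_of_summable_integral_norm
      (fun i ↦ (integrableOn_const (hfin i)).congr_fun (fun x hx ↦ (hf i hx).symm) (hT i))
      (by simpa only [hnorm] using hsum)
  have hhasSum := hasSum_integral_iUnion hT hdisj hint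
  rw [hcover, integrableOn_univ] at hint
  rw [hcover, setIntegral_univ] at hhasSum
  exact ⟨hint, by simpa only [hintegral] using hhasSum⟩

end PiecewiseConstant

theorem Complex.ofReal_natCast_pow_cpow (a m : ℕ) (w : ℂ) :
    (((a : ℝ) ^ m : ℝ) : ℂ) ^ w = ((a : ℂ) ^ w) ^ m := by
  push_cast
  rw [← natCast_cpow_natCast_mul, cpow_nat_mul]

theorem hasSum_sub_pow_mul_pow_succ {P q : ℂ} (h : ‖P * q‖ < 1) :
    HasSum (fun n : ℕ ↦ (P ^ (n + 1) - P ^ n) * q ^ (n + 1)) ((P * q - q) / (1 - P * q)) := by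
  have hgeom := hasSum_geometric_of_norm_lt_one h
  rw [show (P * q - q) / (1 - P * q) = P * q * (1 - P * q)⁻¹ - q * (1 - P * q)⁻¹ by ring]
  exact ((hgeom.mul_left (P * q)).sub (hgeom.mul_left q)).congr_fun fun n ↦ by ring

namespace Padic

variable {p : ℕ} [hp : Fact p.Prime]

theorem exists_lt_norm_sub_natCast_le_inv {y : ℚ_[p]} (hy : ‖y‖ ≤ 1) :
    ∃ k < p, ‖y - k‖ ≤ (p : ℝ)⁻¹ := by
  obtain ⟨k, hkp, hk⟩ := PadicInt.exists_mem_range (⟨y, hy⟩ : ℤ_[p])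
  have hlt : ‖y - k‖ < (p : ℝ) ^ (0 : ℤ) := by
    rw [zpow_zero]
    exact PadicInt.mem_nonunits.mp hk
  refine ⟨k, hkp, ?_⟩
  simpa using (norm_lt_pow_iff_norm_le_pow_sub_one _ 0).mp hlt

theorem norm_mul_p_zpow (x : ℚ_[p]) (m : ℤ) : ‖x * (p : ℚ_[p]) ^ m‖ = ‖x‖ * (p : ℝ) ^ (-m) := by
  rw [norm_mul, norm_p_zpow]

theorem closedBall_zpow_succ_eq_biUnion (n : ℤ) :
    closedBall (0 : ℚ_[p]) ((p : ℝ) ^ (n + 1)) =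
      ⋃ k ∈ Finset.range p, closedBall ((k : ℚ_[p]) * (p : ℚ_[p]) ^ (-(n + 1))) ((p : ℝ) ^ n) := by
  have hp0 : (0 : ℝ) < p := mod_cast hp.out.pos
  have hpn : (p : ℝ) ^ n ≤ (p : ℝ) ^ (n + 1) :=
    zpow_le_zpow_right₀ (mod_cast hp.out.one_lt.le) (by omega)
  ext x
  simp only [mem_iUnion, Finset.mem_range, exists_prop, mem_closedBall_zero_iff]
  constructor
  · intro hx
    obtain ⟨k, hkp, hk⟩ := exists_lt_norm_sub_natCast_le_inv (y := x * (p : ℚ_[p]) ^ (n + 1)) <| by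
      rw [norm_mul_p_zpow, zpow_neg, mul_inv_le_iff₀ (zpow_pos hp0 _), one_mul]
      exact hx
    refine ⟨k, hkp, ?_⟩
    have hx' : x - k * (p : ℚ_[p]) ^ (-(n + 1)) =
        (x * (p : ℚ_[p]) ^ (n + 1) - k) * (p : ℚ_[p]) ^ (-(n + 1)) := by
      rw [sub_mul, mul_assoc, ← zpow_add₀ (mod_cast hp.out.ne_zero), add_neg_cancel, zpow_zero,
        mul_one]
    calc dist x (k * (p : ℚ_[p]) ^ (-(n + 1)))
        = ‖x * (p : ℚ_[p]) ^ (n + 1) - k‖ * (p : ℝ) ^ (n + 1) := by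
          rw [dist_eq_norm, hx', norm_mul_p_zpow, neg_neg]
      _ ≤ (p : ℝ)⁻¹ * (p : ℝ) ^ (n + 1) := by gcongr
      _ = (p : ℝ) ^ n := by
          rw [zpow_add_one₀ hp0.ne']
          field_simp
  · rintro ⟨k, -, hk⟩
    have hcenter : ‖(k : ℚ_[p]) * (p : ℚ_[p]) ^ (-(n + 1))‖ ≤ (p : ℝ) ^ (n + 1) := by
      rw [norm_mul_p_zpow, neg_neg]
      exact mul_le_of_le_one_left (zpow_pos hp0 _).le (norm_int_le_one k)
    simpa using (IsUltrametricDist.dist_triangle_max x _ 0).trans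
      (max_le (hk.trans hpn) (by simpa using hcenter))

theorem norm_natCast_sub_natCast_eq_one {j k : ℕ} (hj : j < p) (hk : k < p) (hjk : j ≠ k) :
    ‖(j : ℚ_[p]) - k‖ = 1 := by
  rw [show (j : ℚ_[p]) - k = ((j - k : ℤ) : ℚ_[p]) by push_cast; ring]
  refine le_antisymm (norm_int_le_one _) (not_lt.mp fun hlt ↦ hjk ?_)
  have := Int.eq_zero_of_abs_lt_dvd (norm_intCast_lt_one_iff.mp hlt) (by rw [abs_lt]; omega)
  omega

variable (p) in
def shell (n : ℕ) : Set ℚ_[p] := {x | max 1 ‖x‖ = (p : ℝ) ^ n}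

theorem exists_max_one_norm_eq_pow (x : ℚ_[p]) : ∃ n : ℕ, max 1 ‖x‖ = (p : ℝ) ^ n := by
  rcases eq_or_ne x 0 with rfl | hx
  · exact ⟨0, by simp⟩
  refine ⟨(-x.valuation).toNat, ?_⟩
  rw [norm_eq_zpow_neg_valuation hx, ← zpow_natCast, Int.toNat_eq_max, ← zpow_zero (p : ℝ),
    (zpow_right_strictMono₀ (mod_cast hp.out.one_lt : (1 : ℝ) < p)).monotone.map_max, max_comm]

theorem iUnion_shell : ⋃ n, shell p n = univ :=
  eq_univ_of_forall fun x ↦ mem_iUnion.mpr (exists_max_one_norm_eq_pow x)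

theorem pairwise_disjoint_shell : Pairwise (Disjoint on shell p) := fun _ _ hmn ↦
  Set.disjoint_left.mpr fun _ hm hn ↦ hmn <|
    pow_right_injective₀ (mod_cast hp.out.pos) (mod_cast hp.out.one_lt.ne') (hm.symm.trans hn)

theorem isClosed_shell (n : ℕ) : IsClosed (shell p n) :=
  isClosed_eq (by fun_prop) continuous_const

theorem shell_subset_closedBall (n : ℕ) : shell p n ⊆ closedBall 0 ((p : ℝ) ^ n) :=
  fun _ hx ↦ mem_closedBall_zero_iff.mpr (hx ▸ le_max_right _ _)

theorem shell_zero : shell p 0 = closedBall 0 1 := by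
  ext x
  simp [shell]

theorem shell_succ (n : ℕ) :
    shell p (n + 1) = closedBall 0 ((p : ℝ) ^ (n + 1)) \ closedBall 0 ((p : ℝ) ^ n) := by
  ext x
  have hp1 : (1 : ℝ) < p ^ (n + 1) := one_lt_pow₀ (mod_cast hp.out.one_lt) n.succ_ne_zero
  have hdiscrete : ‖x‖ ≤ (p : ℝ) ^ n ↔ ‖x‖ < (p : ℝ) ^ (n + 1) := by
    simpa only [← zpow_natCast, Nat.cast_succ] using norm_le_pow_iff_norm_lt_pow_add_one x n
  simp only [shell, mem_ofPred_eq, mem_sdiff, mem_closedBall_zero_iff, hdiscrete, not_lt,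
    ← le_antisymm_iff]
  grind

theorem measure_shell_lt_top [MeasurableSpace ℚ_[p]] {μ : Measure ℚ_[p]}
    [IsFiniteMeasureOnCompacts μ] (n : ℕ) : μ (shell p n) < ⊤ :=
  (measure_mono (shell_subset_closedBall n)).trans_lt measure_closedBall_lt_top

theorem ofReal_max_one_norm_cpow_eqOn_shell (w : ℂ) (n : ℕ) :
    EqOn (fun x : ℚ_[p] ↦ ((max 1 ‖x‖ : ℝ) : ℂ) ^ w) (fun _ ↦ ((p : ℂ) ^ w) ^ n) (shell p n) :=
  fun x hx ↦ by simp only [hx.out, ofReal_natCast_pow_cpow]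

section HaarMeasure

variable [MeasurableSpace ℚ_[p]] [BorelSpace ℚ_[p]] (μ : Measure ℚ_[p]) [μ.IsAddHaarMeasure]

theorem measure_closedBall_zpow_succ (n : ℤ) :
    μ (closedBall 0 ((p : ℝ) ^ (n + 1))) = p * μ (closedBall 0 ((p : ℝ) ^ n)) := by
  have hp1 : (1 : ℝ) < p := mod_cast hp.out.one_lt
  rw [closedBall_zpow_succ_eq_biUnion, measure_biUnion_finset _ fun k _ ↦ measurableSet_closedBall]
  · simp [Measure.addHaar_closedBall_center]
  intro j hj k hk hjk
  simp only [Finset.coe_range, mem_Iio] at hj hk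
  refine Set.disjoint_left.mpr fun x hxj hxk ↦ ?_
  have hdist : dist ((j : ℚ_[p]) * (p : ℚ_[p]) ^ (-(n + 1)))
      ((k : ℚ_[p]) * (p : ℚ_[p]) ^ (-(n + 1))) = (p : ℝ) ^ (n + 1) := by
    rw [dist_eq_norm, ← sub_mul, norm_mul_p_zpow, norm_natCast_sub_natCast_eq_one hj hk hjk,
      neg_neg, one_mul]
  have hle := (IsUltrametricDist.dist_triangle_max _ x _).trans
    (max_le (mem_closedBall'.mp hxj) (mem_closedBall.mp hxk))
  rw [hdist] at hle
  exact hle.not_gt (zpow_lt_zpow_right₀ hp1 (by omega))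

theorem measure_closedBall_pow (n : ℕ) :
    μ (closedBall 0 ((p : ℝ) ^ n)) = p ^ n * μ (closedBall 0 1) := by
  induction n with
  | zero => simp
  | succ n ih =>
    have h := measure_closedBall_zpow_succ μ n
    rw [← Nat.cast_succ, zpow_natCast, zpow_natCast] at h
    rw [h, ih, pow_succ]
    ring

theorem measureReal_shell_le (n : ℕ) :
    μ.real (shell p n) ≤ p ^ n * μ.real (closedBall 0 1) := by
  refine (measureReal_mono (shell_subset_closedBall n) measure_closedBall_lt_top.ne).trans_eq ?_
  simp [measureReal_def, measure_closedBall_pow]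

theorem measureReal_shell_succ (n : ℕ) :
    μ.real (shell p (n + 1)) = (p ^ (n + 1) - p ^ n) * μ.real (closedBall 0 1) := by
  have hsub : closedBall (0 : ℚ_[p]) ((p : ℝ) ^ n) ⊆ closedBall 0 ((p : ℝ) ^ (n + 1)) :=
    closedBall_subset_closedBall (pow_le_pow_right₀ (mod_cast hp.out.one_lt.le) n.le_succ)
  rw [shell_succ, measureReal_sdiff hsub measurableSet_closedBall measure_closedBall_lt_top.ne]
  simp only [measureReal_def, measure_closedBall_pow, ENNReal.toReal_mul, ENNReal.toReal_pow,
    ENNReal.toReal_natCast]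
  ring

theorem summable_measureReal_shell_mul_norm_pow {q : ℂ} (hq : ‖(p : ℂ) * q‖ < 1) :
    Summable fun n ↦ μ.real (shell p n) * ‖q ^ n‖ := by
  refine .of_nonneg_of_le (fun n ↦ by positivity) (fun n ↦ ?_)
    ((summable_geometric_of_lt_one (norm_nonneg _) hq).mul_right (μ.real (closedBall 0 1)))
  rw [norm_pow, norm_mul, mul_pow, Complex.norm_natCast, mul_right_comm]
  exact mul_le_mul_of_nonneg_right (measureReal_shell_le μ n) (by positivity)

theorem hasSum_measureReal_shell_smul_pow {q : ℂ} (hq : ‖(p : ℂ) * q‖ < 1) :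
    HasSum (fun n ↦ μ.real (shell p n) • q ^ n)
      (μ.real (closedBall 0 1) * ((1 - q) / (1 - p * q))) := by
  have hne : 1 - (p : ℂ) * q ≠ 0 := sub_ne_zero.mpr fun h ↦ by simp [← h] at hq
  have hshifted := (hasSum_sub_pow_mul_pow_succ hq).mul_left (μ.real (closedBall 0 1) : ℂ)
  rw [show (μ.real (closedBall 0 1) : ℂ) * ((1 - q) / (1 - p * q)) =
      μ.real (closedBall 0 1) * ((p * q - q) / (1 - p * q)) +
        ∑ i ∈ Finset.range 1, μ.real (shell p i) • q ^ i by
    rw [Finset.sum_range_one, shell_zero, pow_zero, real_smul, mul_one, ← mul_add_one,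
      div_add_one hne]
    ring]
  exact (hasSum_nat_add_iff 1).mp <| hshifted.congr_fun fun n ↦ by
    simp only [measureReal_shell_succ, real_smul]
    push_cast
    ring

end HaarMeasure

end Padic

/-- Gindikin–Karpelevich/Casselman value of the standard intertwining operator of `SL₂(ℚ_p)` on
the spherical vector: for the Haar measure `μ` on `ℚ_p` with `μ(ℤ_p) = 1` and `Re s > 0`,
`∫_{ℚ_p} max(1, |x|_p)^(-(s+1)) dμ(x) = (1 - p^(-(s+1))) / (1 - p^(-s))`. -/
theorem sl2_padic_gindikin_karpelevich (p : ℕ) [Fact p.Prime]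
    [MeasurableSpace ℚ_[p]] [BorelSpace ℚ_[p]] (μ : Measure ℚ_[p]) [μ.IsAddHaarMeasure]
    (hμ : μ {x : ℚ_[p] | ‖x‖ ≤ 1} = 1) (s : ℂ) (hs : 0 < s.re) :
    Integrable (fun x : ℚ_[p] => ((max 1 ‖x‖ : ℝ) : ℂ) ^ (-(s + 1))) μ ∧
      ∫ x : ℚ_[p], ((max 1 ‖x‖ : ℝ) : ℂ) ^ (-(s + 1)) ∂μ =
        (1 - (p : ℂ) ^ (-(s + 1))) / (1 - (p : ℂ) ^ (-s)) := by
  have hp := (Fact.out : p.Prime)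
  have hball : μ.real (closedBall 0 1) = 1 := by
    rw [measureReal_def, show closedBall (0 : ℚ_[p]) 1 = {x | ‖x‖ ≤ 1} by ext; simp, hμ,
      ENNReal.toReal_one]
  have hpq : (p : ℂ) * p ^ (-(s + 1)) = p ^ (-s) := by
    rw [show -s = 1 + -(s + 1) by ring, cpow_add _ _ (mod_cast hp.ne_zero), cpow_one]
  have hpq_lt : ‖(p : ℂ) * p ^ (-(s + 1))‖ < 1 := by
    rw [hpq, norm_natCast_cpow_of_pos hp.pos]
    exact Real.rpow_lt_one_of_one_lt_of_neg (mod_cast hp.one_lt) (by simpa using hs)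
  obtain ⟨hint, hsum⟩ := integrable_and_hasSum_integral_of_eqOn_const
    (fun n ↦ (Padic.isClosed_shell n).measurableSet) Padic.pairwise_disjoint_shell
    Padic.iUnion_shell (fun n ↦ (Padic.measure_shell_lt_top n).ne)
    (Padic.ofReal_max_one_norm_cpow_eqOn_shell _)
    (Padic.summable_measureReal_shell_mul_norm_pow μ hpq_lt)
  have hseries := Padic.hasSum_measureReal_shell_smul_pow μ hpq_lt
  rw [hball, ofReal_one, one_mul, hpq] at hseries
  exact ⟨hint, hsum.unique hseries⟩
end

section
/- For every complex number s with Re(s) > 1, one has (∫_ℝ (1 + x^2)^(-(s+1)/2) dx) · (ζ(s) / ζ(s+1)) = Λ(s) / Λ(s+1), where ζ is the Riemann zeta function and Λ is the completed Riemann zeta function. (This is the paper's theorem made explicit for G = SL₂ over ℚ with trivial unramified character: the value of the global standard intertwining operator on the spherical vector equals the ratio Λ(s)/Λ(s+1) of completed Hecke L-functions, the archimedean local factor being the displayed integral.) -/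
open Complex MeasureTheory Real Set

theorem integrable_one_add_sq_cpow_neg {a : ℂ} (ha : 1 / 2 < a.re) :
    Integrable fun x : ℝ ↦ ((1 + x ^ 2 : ℝ) : ℂ) ^ (-a) := by
  have hcont : Continuous fun x : ℝ ↦ ((1 + x ^ 2 : ℝ) : ℂ) ^ (-a) :=
    (continuous_ofReal.comp (by fun_prop)).cpow continuous_const
      fun x ↦ ofReal_mem_slitPlane.mpr (by positivity)
  refine (integrable_rpow_neg_one_add_norm_sq (r := 2 * a.re) (by simp; linarith)).mono'
    hcont.aestronglyMeasurable (ae_of_all _ fun x ↦ le_of_eq ?_)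
  rw [norm_cpow_eq_rpow_re_of_pos (by positivity), norm_eq_abs, sq_abs, neg_re]
  ring_nf

theorem image_inv_one_add_sq_Ioi : (fun t : ℝ ↦ (1 + t ^ 2)⁻¹) '' Ioi 0 = Ioo 0 1 := by
  ext y
  constructor
  · rintro ⟨t, ht, rfl⟩
    exact ⟨by positivity, inv_lt_one_of_one_lt₀ (by nlinarith [mem_Ioi.mp ht])⟩
  · rintro ⟨hy0, hy1⟩
    have h1 : 1 < y⁻¹ := (one_lt_inv₀ hy0).2 hy1
    refine ⟨√(y⁻¹ - 1), Real.sqrt_pos.mpr (by linarith), ?_⟩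
    simp only [Real.sq_sqrt (by linarith : (0:ℝ) ≤ y⁻¹ - 1), add_sub_cancel, inv_inv]

theorem strictAntiOn_inv_one_add_sq : StrictAntiOn (fun t : ℝ ↦ (1 + t ^ 2)⁻¹) (Ici 0) :=
  fun _ ht₁ _ _ h ↦ inv_strictAnti₀ (by positivity) (by gcongr)

theorem ofReal_cpow_eq_exp_mul_log {r : ℝ} (hr : 0 < r) (w : ℂ) :
    (r : ℂ) ^ w = Complex.exp (w * Real.log r) := by
  rw [cpow_def_of_ne_zero (by exact_mod_cast hr.ne'), ← ofReal_log hr.le, mul_comm]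

theorem ofReal_eq_exp_log {r : ℝ} (hr : 0 < r) : (r : ℂ) = Complex.exp (Real.log r) := by
  rw [← ofReal_exp, Real.exp_log hr]

theorem abs_deriv_smul_betaIntegrand_eq (a : ℂ) {t : ℝ} (ht : 0 < t) :
    |-(2 * t) / (1 + t ^ 2) ^ 2| • ((((1 + t ^ 2)⁻¹ : ℝ) : ℂ) ^ (a - 1 / 2 - 1) *
      (1 - (((1 + t ^ 2)⁻¹ : ℝ) : ℂ)) ^ ((1 : ℂ) / 2 - 1)) =
      2 * ((1 + t ^ 2 : ℝ) : ℂ) ^ (-a) := by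
  have hq : 0 < 1 + t ^ 2 := by positivity
  have habs : |-(2 * t) / (1 + t ^ 2) ^ 2| = 2 * (t / (1 + t ^ 2) ^ 2) := by
    rw [neg_div, abs_neg, abs_of_pos (by positivity), mul_div_assoc]
  have hsub : 1 - (((1 + t ^ 2)⁻¹ : ℝ) : ℂ) = ((t ^ 2 / (1 + t ^ 2) : ℝ) : ℂ) := by
    have : (1 + t ^ 2 : ℂ) ≠ 0 := by exact_mod_cast hq.ne'
    push_cast
    field_simp
    ring
  rw [habs, real_smul, hsub, ofReal_mul, ofReal_ofNat, mul_assoc,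
    ofReal_eq_exp_log (by positivity : 0 < t / (1 + t ^ 2) ^ 2),
    ofReal_cpow_eq_exp_mul_log (by positivity), ofReal_cpow_eq_exp_mul_log (by positivity),
    ofReal_cpow_eq_exp_mul_log hq, ← Complex.exp_add, ← Complex.exp_add]
  congr 2
  rw [Real.log_div ht.ne' (by positivity), Real.log_div (by positivity) hq.ne', Real.log_inv,
    Real.log_pow, Real.log_pow]
  push_cast
  ring

theorem betaIntegral_sub_half_half_eq_integral_Ioi (a : ℂ) :
    betaIntegral (a - 1 / 2) (1 / 2) =
      2 * ∫ t in Ioi (0 : ℝ), ((1 + t ^ 2 : ℝ) : ℂ) ^ (-a) := by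
  have hderiv : ∀ t ∈ Ioi (0 : ℝ), HasDerivWithinAt (fun t : ℝ ↦ (1 + t ^ 2)⁻¹)
      (-(2 * t) / (1 + t ^ 2) ^ 2) (Ioi 0) t := fun t _ ↦
    ((((hasDerivAt_pow 2 t).const_add 1).inv (by positivity)).congr_deriv
      (by norm_num)).hasDerivWithinAt
  rw [betaIntegral, intervalIntegral.integral_of_le zero_le_one, integral_Ioc_eq_integral_Ioo,
    ← image_inv_one_add_sq_Ioi, integral_image_eq_integral_abs_deriv_smul measurableSet_Ioi hderiv
      (strictAntiOn_inv_one_add_sq.mono Ioi_subset_Ici_self).injOn, ← integral_const_mul]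
  exact setIntegral_congr_fun measurableSet_Ioi fun t ht ↦ abs_deriv_smul_betaIntegrand_eq a ht

theorem integral_one_add_sq_cpow_neg {a : ℂ} (ha : 1 / 2 < a.re) :
    ∫ x : ℝ, ((1 + x ^ 2 : ℝ) : ℂ) ^ (-a) =
      Complex.Gamma (a - 1 / 2) * Complex.Gamma (1 / 2) / Complex.Gamma a := by
  rw [integral_eq_two_smul_integral_Ioi_of_even (integrable_one_add_sq_cpow_neg ha)
      (fun x ↦ by rw [neg_sq]), real_smul, ofReal_ofNat,
    ← betaIntegral_sub_half_half_eq_integral_Ioi,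
    betaIntegral_eq_Gamma_mul_div _ _ (by simpa using ha) (by norm_num), sub_add_cancel]

theorem integral_one_add_sq_cpow_eq_Gammaℝ_div {s : ℂ} (hs : 0 < s.re) :
    ∫ x : ℝ, ((1 + x ^ 2 : ℝ) : ℂ) ^ (-(s + 1) / 2) = Gammaℝ s / Gammaℝ (s + 1) := by
  have hπ : (π : ℂ) ≠ 0 := ofReal_ne_zero.mpr pi_ne_zero
  have hΓ : Gamma ((s + 1) / 2) ≠ 0 := Gamma_ne_zero_of_re_pos (by simp; positivity)
  simp_rw [neg_div]
  rw [integral_one_add_sq_cpow_neg (by simp; linarith), Complex.Gamma_one_half_eq, Gammaℝ_def,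
    Gammaℝ_def, show (s + 1) / 2 - 1 / 2 = s / 2 by ring,
    show -s / 2 = 1 / 2 + -((s + 1) / 2) by ring, cpow_add _ _ hπ]
  field_simp

theorem completedRiemannZeta_eq_riemannZeta_mul_Gammaℝ {s : ℂ} (hs : Gammaℝ s ≠ 0) :
    completedRiemannZeta s = riemannZeta s * Gammaℝ s := by
  have hs0 : s ≠ 0 := by rintro rfl; exact hs (Gammaℝ_eq_zero_iff.mpr ⟨0, by simp⟩)
  rw [riemannZeta_def_of_ne_zero hs0, div_mul_cancel₀ _ hs]

/-- The paper's theorem for `G = SL₂` over `ℚ` with trivial unramified character: the value of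
the global standard intertwining operator on the spherical vector equals `Λ(s)/Λ(s+1)`:
for `Re s > 1`,
`(∫_ℝ (1 + x²)^(-(s+1)/2) dx) · (ζ(s)/ζ(s+1)) = Λ(s)/Λ(s+1)`. -/
theorem sl2_global_intertwining_spherical (s : ℂ) (hs : 1 < s.re) :
    (∫ x : ℝ, ((1 + x ^ 2 : ℝ) : ℂ) ^ (-(s + 1) / 2)) *
        (riemannZeta s / riemannZeta (s + 1)) =
      completedRiemannZeta s / completedRiemannZeta (s + 1) := by
  have hs₀ : 0 < s.re := by linarith
  have hs₁ : 0 < (s + 1).re := by simp; linarith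
  rw [integral_one_add_sq_cpow_eq_Gammaℝ_div hs₀,
    completedRiemannZeta_eq_riemannZeta_mul_Gammaℝ (Gammaℝ_ne_zero_of_re_pos hs₀),
    completedRiemannZeta_eq_riemannZeta_mul_Gammaℝ (Gammaℝ_ne_zero_of_re_pos hs₁),
    div_mul_div_comm, mul_comm (Gammaℝ s), mul_comm (Gammaℝ (s + 1))]
end
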